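/- arXiv:1901.07934 — 2 statements merged into one kernel-verified Lean document; each statement's English description precedes it below -/
import Mathlib

section
/- Let K be a number field of degree 2 and 𝔭 a prime of K over 2 with Nr(𝔭) = 2 that splits in K(i)/K (where [K(i):K] = 2). Then e(𝔭|2) is even, hence e(𝔭|2) = 2 and 𝔭 is the unique prime of K over 2; in particular, 2 is not unramified in K with two primes above it both of norm 2. -/
open NumberField Ideal

/-- Let `K` be a quadratic number field and `𝔭` a prime of `𝓞 K` over `2` with `Nr(𝔭) = 2`
which splits in the quadratic extension `K(i)/K`.  Then `e(𝔭 | 2) = 2` and `𝔭` is the unique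
prime of `K` lying over `2`. -/
theorem dyadic_prime_of_quadratic_field_splitting_in_K_i
    (K L : Type*) [Field K] [NumberField K] [Field L] [NumberField L] [Algebra K L]
    (hK : Module.finrank ℚ K = 2)
    (hdeg : Module.finrank K L = 2) (i : L) (hi : i ^ 2 = -1)
    (P : Ideal (𝓞 K)) (hP : P.IsPrime) (hP0 : P ≠ ⊥)
    (h2 : (2 : 𝓞 K) ∈ P) (hN : Ideal.absNorm P = 2)
    (Q Q' : Ideal (𝓞 L)) (hQ : Q.IsPrime) (hQ' : Q'.IsPrime) (hQQ' : Q ≠ Q')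
    (hsplit : Ideal.map (algebraMap (𝓞 K) (𝓞 L)) P = Q * Q')
    (he : Ideal.ramificationIdx' P Q = 1)
    (he' : Ideal.ramificationIdx' P Q' = 1)
    (hf : Ideal.inertiaDeg' P Q = 1)
    (hf' : Ideal.inertiaDeg' P Q' = 1) :
    Ideal.ramificationIdx' (Ideal.span {(2 : ℤ)}) P = 2 ∧
      ∀ R : Ideal (𝓞 K), R.IsPrime → R ≠ ⊥ → (2 : 𝓞 K) ∈ R → R = P := by
  classical
  haveI := hP
  haveI := hQ
  -- i is an algebraic integer
  obtain ⟨j, hj⟩ : ∃ j : 𝓞 L, (j : L) = i := by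
    refine ⟨⟨i, ?_⟩, rfl⟩
    exact ⟨Polynomial.X ^ 2 + Polynomial.C 1, by monicity!, by simp [hi]⟩
  have hj2 : j ^ 2 = -1 := by
    apply RingOfIntegers.coe_injective
    push_cast [hj]
    exact hi
  -- j is a unit, and (1+j)^2 = 2j
  have hju : IsUnit j := IsUnit.of_mul_eq_one (-j) (by rw [mul_neg, ← sq, hj2, neg_neg])
  have hsq : (1 + j) ^ 2 = 2 * j := by ring_nf; rw [hj2]; ring
  have hj1 : 1 + j ≠ 0 := by
    intro h
    have : j = -1 := by linear_combination h
    rw [this] at hj2; norm_num at hj2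
  -- map of (2) in 𝓞 L equals (1+j)^2
  have hspan2 : Ideal.span {(2 : 𝓞 L)} = Ideal.span {1 + j} ^ 2 := by
    have : Ideal.span {(2 : 𝓞 L)} * Ideal.span {j} = Ideal.span {1 + j} ^ 2 := by
      rw [Ideal.span_singleton_mul_span_singleton, ← hsq, Ideal.span_singleton_pow]
    rwa [Ideal.span_singleton_eq_top.mpr hju, mul_top] at this
  -- abbreviations
  set e := Ideal.ramificationIdx' (Ideal.span {(2 : ℤ)}) P with hedef
  have hmap2K : Ideal.map (algebraMap ℤ (𝓞 K)) (Ideal.span {(2 : ℤ)}) =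
      Ideal.span {(2 : 𝓞 K)} := by
    rw [Ideal.map_span]; norm_num
  have hmap2L : Ideal.map (algebraMap ℤ (𝓞 L)) (Ideal.span {(2 : ℤ)}) =
      Ideal.span {(2 : 𝓞 L)} := by
    rw [Ideal.map_span]; norm_num
  have h2K0 : Ideal.span {(2 : 𝓞 K)} ≠ ⊥ := by
    simp [Ideal.span_singleton_eq_bot]
  have h2L0 : Ideal.span {(2 : 𝓞 L)} ≠ ⊥ := by
    simp [Ideal.span_singleton_eq_bot]
  have hmapP0 : Ideal.map (algebraMap (𝓞 K) (𝓞 L)) P ≠ ⊥ := by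
    intro h
    exact hP0 ((Ideal.map_eq_bot_iff_of_injective
      (FaithfulSMul.algebraMap_injective (𝓞 K) (𝓞 L))).mp h)
  have hQ0 : Q ≠ ⊥ := by
    intro h
    exact hmapP0 (by rw [hsplit, h, bot_mul])
  -- inclusion map P ≤ Q
  have hPQ : Ideal.map (algebraMap (𝓞 K) (𝓞 L)) P ≤ Q := by
    rw [hsplit]; exact Ideal.mul_le_left
  have hfg : Ideal.map (algebraMap ℤ (𝓞 L)) (Ideal.span {(2 : ℤ)}) ≠ ⊥ := by
    rw [hmap2L]; exact h2L0
  -- ramification index of Q over 2 is e, by multiplicativity in towers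
  have htower : Ideal.ramificationIdx' (Ideal.span {(2 : ℤ)}) Q = e := by
    rw [Ideal.ramificationIdx'_algebra_tower hmapP0 hfg hPQ, he, mul_one]
  -- that index is even since (2) = (1+j)^2 in 𝓞 L
  have heven : Even e := by
    rw [← htower,
      Ideal.IsDedekindDomain.ramificationIdx'_eq_normalizedFactors_count hfg hQ hQ0, hmap2L,
      hspan2, UniqueFactorizationMonoid.normalizedFactors_pow, Multiset.count_nsmul]
    exact ⟨_, (two_mul _)⟩
  -- the norm of (2) in 𝓞 K is 4
  have hnorm2 : Ideal.absNorm (Ideal.span {(2 : 𝓞 K)}) = 4 := by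
    rw [Ideal.absNorm_span_singleton]
    have h0 : (2 : 𝓞 K) = algebraMap ℤ (𝓞 K) 2 := by norm_num
    rw [h0, Algebra.norm_algebraMap_of_basis (NumberField.RingOfIntegers.basis K),
      ← Module.finrank_eq_card_chooseBasisIndex, NumberField.RingOfIntegers.rank, hK]
    norm_num
  -- e ≠ 0
  have hene : e ≠ 0 := by
    refine Ideal.IsDedekindDomain.ramificationIdx'_ne_zero (by rw [hmap2K]; exact h2K0) hP ?_
    rw [hmap2K]
    exact (Ideal.span_singleton_le_iff_mem P).mpr h2
  -- e ≤ 2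
  have hle : Ideal.span {(2 : 𝓞 K)} ≤ P ^ e := by
    rw [← hmap2K]; exact Ideal.le_pow_ramificationIdx'
  have hdvd : Ideal.absNorm (P ^ e) ∣ Ideal.absNorm (Ideal.span {(2 : 𝓞 K)}) :=
    Ideal.absNorm_dvd_absNorm_of_le hle
  rw [map_pow, hN, hnorm2] at hdvd
  have he2 : e ≤ 2 := by
    have : (2 : ℕ) ^ e ∣ 2 ^ 2 := by norm_num at hdvd ⊢; exact hdvd
    exact (Nat.pow_dvd_pow_iff_le_right one_lt_two).mp this
  obtain ⟨k, hk⟩ := heven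
  have hee : e = 2 := by omega
  refine ⟨hee, ?_⟩
  -- uniqueness: (2) = P^2
  have hle2 : Ideal.span {(2 : 𝓞 K)} ≤ P ^ 2 := hee ▸ hle
  have hPmax : P.IsMaximal := Ideal.IsPrime.isMaximal hP hP0
  have heq : Ideal.span {(2 : 𝓞 K)} = P ^ 2 := by
    obtain ⟨J, hJ⟩ := (Ideal.dvd_iff_le).mpr hle2
    have hJ1 : Ideal.absNorm J = 1 := by
      have := congrArg Ideal.absNorm hJ
      rw [_root_.map_mul, map_pow, hN, hnorm2] at this
      omega
    rw [hJ, Ideal.absNorm_eq_one_iff.mp hJ1, mul_top]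
  intro R hR hR0 h2R
  have hPR : P ≤ R := by
    have : P ^ 2 ≤ R := heq ▸ (Ideal.span_singleton_le_iff_mem R).mpr h2R
    rw [pow_two] at this
    exact (hR.mul_le.mp this).elim id id
  exact (hPmax.eq_of_le hR.ne_top hPR).symm
end

section
/- There is no quaternion algebra A over ℚ, ramified at the infinite place, such that (1/12)·∏_{p ∈ Ram_f(A)} (p − 1) = 211 and for every n with ℚ(ζ_{2n}) of degree 2 over ℚ (i.e., n ∈ {2, 3}) some finite ramified prime of A splits in ℚ(ζ_{2n}). Equivalently, as a statement about finite sets of primes: there is no finite set S of odd primes (of odd or even cardinality, with ∞ counted to make total ramification even) such that ∏_{p ∈ S}(p−1) = 12·211 = 2532 and S contains a prime ≡ 1 (mod 4) and a prime ≡ 1 (mod 3). -/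
lemma div2532_mod4 (d : ℕ) (hd : d ∣ 2532) (h4 : 4 ∣ d) :
    d = 4 ∨ d = 12 ∨ d = 844 ∨ d = 2532 := by
  obtain ⟨e, rfl⟩ := h4
  have he : e ∣ 633 := (mul_dvd_mul_iff_left (by norm_num : (4:ℕ) ≠ 0)).mp hd
  have he' : e ∣ 3 * 211 := by norm_num at he ⊢; exact he
  obtain ⟨a, b, ha, hb, rfl⟩ := exists_dvd_and_dvd_of_dvd_mul he'
  rcases (Nat.prime_three).eq_one_or_self_of_dvd a ha with rfl | rfl <;>
    rcases (by norm_num : Nat.Prime 211).eq_one_or_self_of_dvd b hb with rfl | rfl <;> omega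

lemma div2532_mod3 (d : ℕ) (hd : d ∣ 2532) (h3 : 3 ∣ d) :
    d = 3 ∨ d = 6 ∨ d = 12 ∨ d = 633 ∨ d = 1266 ∨ d = 2532 := by
  obtain ⟨e, rfl⟩ := h3
  have he : e ∣ 844 := (mul_dvd_mul_iff_left (by norm_num : (3:ℕ) ≠ 0)).mp hd
  have he' : e ∣ 4 * 211 := by norm_num at he ⊢; exact he
  obtain ⟨a, b, ha, hb, rfl⟩ := exists_dvd_and_dvd_of_dvd_mul he'
  have ha4 : a ≤ 4 := Nat.le_of_dvd (by norm_num) ha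
  rcases (by norm_num : Nat.Prime 211).eq_one_or_self_of_dvd b hb with rfl | rfl <;>
    interval_cases a <;> omega

/-- There is no finite set `S` of primes with `∏_{p ∈ S} (p - 1) = 12 · 211 = 2532` that
contains both a prime `≡ 1 (mod 4)` and a prime `≡ 1 (mod 3)`.  This is the arithmetic
obstruction to a torsion-free maximal-order congruence surface of genus `212` over `ℚ`. -/
theorem no_rational_quaternion_algebra_genus_212 :
    ¬ ∃ S : Finset ℕ, (∀ p ∈ S, p.Prime) ∧ (∏ p ∈ S, (p - 1)) = 2532 ∧
      (∃ p ∈ S, p % 4 = 1) ∧ (∃ p ∈ S, p % 3 = 1) := by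
  rintro ⟨S, hS, hprod, ⟨p, hpS, hp4⟩, ⟨q, hqS, hq3⟩⟩
  have hdvd : ∀ r ∈ S, (r - 1) ∣ 2532 := fun r hr => hprod ▸ Finset.dvd_prod_of_mem _ hr
  have hp2 : 2 ≤ p := (hS p hpS).two_le
  have hq2 : 2 ≤ q := (hS q hqS).two_le
  -- candidates for p
  have hp' : p = 5 ∨ p = 13 := by
    have h4 : 4 ∣ p - 1 := by omega
    rcases div2532_mod4 (p - 1) (hdvd p hpS) h4 with h | h | h | h
    · left; omega
    · right; omega
    · exfalso
      have : p = 845 := by omega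
      exact absurd (hS p hpS) (by rw [this]; norm_num)
    · exfalso
      have : p = 2533 := by omega
      exact absurd (hS p hpS) (by rw [this]; norm_num)
  -- candidates for q
  have hq' : q = 7 ∨ q = 13 := by
    have h3 : 3 ∣ q - 1 := by omega
    rcases div2532_mod3 (q - 1) (hdvd q hqS) h3 with h | h | h | h | h | h
    · exfalso
      have : q = 4 := by omega
      exact absurd (hS q hqS) (by rw [this]; norm_num)
    · left; omega
    · right; omega
    · exfalso
      have : q = 634 := by omega
      exact absurd (hS q hqS) (by rw [this]; norm_num)
    · exfalso
      have : q = 1267 := by omega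
      exact absurd (hS q hqS) (by rw [this]; norm_num)
    · exfalso
      have : q = 2533 := by omega
      exact absurd (hS q hqS) (by rw [this]; norm_num)
  -- when p and q are distinct, (p-1)(q-1) divides 2532
  have hpair : ∀ a b : ℕ, a ∈ S → b ∈ S → a ≠ b → (a-1)*(b-1) ∣ 2532 := by
    intro a b ha hb hab
    have hsubset : ({a, b} : Finset ℕ) ⊆ S := by
      intro x hx; simp only [Finset.mem_insert, Finset.mem_singleton] at hx
      rcases hx with h | h <;> simp [h, ha, hb]
    calc (a-1)*(b-1) = ∏ r ∈ ({a,b} : Finset ℕ), (r-1) :=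
          (Finset.prod_pair (f := fun r => r - 1) hab).symm
    _ ∣ ∏ r ∈ S, (r-1) := Finset.prod_dvd_prod_of_subset _ _ _ hsubset
    _ = 2532 := hprod
  rcases hp' with rfl | rfl <;> rcases hq' with rfl | rfl
  · have := hpair 5 7 hpS hqS (by norm_num)
    norm_num at this
  · have := hpair 5 13 hpS hqS (by norm_num)
    norm_num at this
  · have := hpair 13 7 hpS hqS (by norm_num)
    norm_num at this
  · -- p = q = 13: the remaining product must be 211, but no prime contributes it
    have hmul := Finset.mul_prod_erase S (fun x => x - 1) hpS
    simp only [hprod] at hmul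
    have hT : ∏ r ∈ S.erase 13, (r - 1) = 211 := by omega
    have hall : ∀ r ∈ S.erase 13, r - 1 = 1 := by
      intro r hr
      have hrS := Finset.mem_of_mem_erase hr
      have hr2 : 2 ≤ r := (hS r hrS).two_le
      have hd : (r - 1) ∣ 211 := hT ▸ Finset.dvd_prod_of_mem _ hr
      rcases (by norm_num : Nat.Prime 211).eq_one_or_self_of_dvd _ hd with h | h
      · exact h
      · exfalso
        have hr212 : r = 212 := by omega
        exact absurd (hS r hrS) (by rw [hr212]; norm_num)
    rw [Finset.prod_congr rfl hall] at hT
    simp at hT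
end
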